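/- arXiv:1702.02220 — 3 statements merged into one kernel-verified Lean document; each statement's English description precedes it below -/
import Mathlib

section
/- Let U ∈ U(N) be a unitary matrix with all entries nonzero. For each differentiable function φ : (0,∞) → ℝ define W_φ ∈ M_N(ℂ) by (W_φ)_{ij} = sgn(U_{ij})·φ'(|U_{ij}|). Then the matrix W_φ·U* is self-adjoint for every differentiable φ : (0,∞) → ℝ if and only if U is semi-balanced, i.e. the matrices U_r·U* and U*·U_r are self-adjoint for every r > 0. -/
/-!
`W_φ` is the combination `∑ r, φ'(r) • U_r` of the color components with real coefficients, so
semi-balancedness makes `W_φ U*` self-adjoint. Conversely, `U` has finitely many entry moduli, so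
an antiderivative of a Lagrange interpolant gives `φ` with `W_φ = U_r`; unitarity then turns the
self-adjointness of `U_r U*` into that of `U* U_r = U* (U_r U*) U`.
-/

open scoped Matrix

/-- the sign `sgn(z) = z/|z|` of a complex number (with `sgn 0 = 0`). -/
noncomputable def csgn (z : ℂ) : ℂ := z / ‖z‖

/-- the color component `U_r` of a matrix `U`. -/
noncomputable def colorComp {n : Type*} (U : Matrix n n ℂ) (r : ℝ) :
    Matrix n n ℂ :=
  Matrix.of fun i j => if ‖U i j‖ = r then csgn (U i j) else 0

theorem exists_differentiable_deriv_eq_on_finset (S : Finset ℝ) (c : ℝ → ℝ) :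
    ∃ φ : ℝ → ℝ, Differentiable ℝ φ ∧ ∀ s ∈ S, deriv φ s = c s := by
  set P := Lagrange.interpolate S id c
  refine ⟨fun x => ∫ t in (0)..x, P.eval t,
    fun x => (P.continuous.integral_hasStrictDerivAt 0 x).hasDerivAt.differentiableAt, fun s hs => ?_⟩
  rw [P.continuous.deriv_integral]
  exact Lagrange.eval_interpolate_at_node c (Set.injOn_id _) hs

theorem Matrix.IsHermitian.conjTranspose_mul_of_mem_unitaryGroup {n α : Type*} [Fintype n]
    [DecidableEq n] [CommRing α] [StarRing α] {U W : Matrix n n α}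
    (h : (W * Uᴴ).IsHermitian) (hU : U ∈ Matrix.unitaryGroup n α) : (Uᴴ * W).IsHermitian := by
  have hUU : Uᴴ * U = 1 := hU.1
  simpa [Matrix.mul_assoc, hUU] using Matrix.isHermitian_conjTranspose_mul_mul U h

section colorComp

variable {n : Type*} (U : Matrix n n ℂ)

theorem colorComp_eq_zero_of_nonpos {r : ℝ} (hr : r ≤ 0) : colorComp U r = 0 := by
  ext i j
  by_cases h : ‖U i j‖ = r
  · have : U i j = 0 := norm_le_zero_iff.mp (h ▸ hr)
    simp [colorComp, csgn, this]
  · simp [colorComp, h]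

theorem of_csgn_mul_eq_sum_smul_colorComp (f : ℝ → ℂ) {S : Finset ℝ}
    (hS : ∀ i j, ‖U i j‖ ∈ S) :
    Matrix.of (fun i j => csgn (U i j) * f ‖U i j‖) = ∑ r ∈ S, f r • colorComp U r := by
  ext i j
  simp [Matrix.sum_apply, colorComp, hS i j, mul_comm]

theorem exists_of_csgn_mul_deriv_eq_colorComp [Fintype n] (r : ℝ) :
    ∃ φ : ℝ → ℝ, Differentiable ℝ φ ∧
      Matrix.of (fun i j => csgn (U i j) * deriv φ ‖U i j‖) = colorComp U r := by
  classical
  obtain ⟨φ, hφ, hφS⟩ := exists_differentiable_deriv_eq_on_finset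
    (Finset.univ.image fun p : n × n => ‖U p.1 p.2‖) (fun s => if s = r then 1 else 0)
  refine ⟨φ, hφ, ?_⟩
  ext i j
  rw [Matrix.of_apply, hφS _ (Finset.mem_image_of_mem _ (Finset.mem_univ (i, j)))]
  split_ifs with h <;> simp [colorComp, h]

theorem isHermitian_of_csgn_mul_mul_conjTranspose [Fintype n] (f : ℝ → ℝ)
    (h : ∀ r, (colorComp U r * Uᴴ).IsHermitian) :
    (Matrix.of (fun i j => csgn (U i j) * f ‖U i j‖) * Uᴴ).IsHermitian := by
  classical
  rw [of_csgn_mul_eq_sum_smul_colorComp U (fun r => (f r : ℂ))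
    (S := Finset.univ.image fun p : n × n => ‖U p.1 p.2‖)
    fun i j => Finset.mem_image_of_mem _ (Finset.mem_univ (i, j)), Finset.sum_mul]
  refine isSelfAdjoint_sum _ fun r _ => ?_
  rw [Matrix.smul_mul]
  exact (h r).smul (Complex.conj_ofReal (f r))

end colorComp

theorem stmt3_general (N : ℕ) (U : Matrix (Fin N) (Fin N) ℂ)
    (hU : U ∈ Matrix.unitaryGroup (Fin N) ℂ) :
    (∀ φ : ℝ → ℝ, (∀ x > (0 : ℝ), DifferentiableAt ℝ φ x) →
      ((Matrix.of fun i j => csgn (U i j) * deriv φ ‖U i j‖) * Uᴴ).IsHermitian) ↔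
    (∀ r : ℝ, 0 < r →
      (colorComp U r * Uᴴ).IsHermitian ∧ (Uᴴ * colorComp U r).IsHermitian) := by
  constructor
  · intro hW r _
    obtain ⟨φ, hφ, hφW⟩ := exists_of_csgn_mul_deriv_eq_colorComp U r
    have hr := hφW ▸ hW φ fun x _ => hφ x
    exact ⟨hr, hr.conjTranspose_mul_of_mem_unitaryGroup hU⟩
  · intro hbal φ _
    refine isHermitian_of_csgn_mul_mul_conjTranspose U _ fun r => ?_
    rcases le_or_gt r 0 with hr | hr
    · simp [colorComp_eq_zero_of_nonpos U hr]
    · exact (hbal r hr).1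

/-- For `U ∈ U(N)` with nonzero entries, the matrices
`W_φ·U*` (with `(W_φ)_{ij} = sgn(U_{ij}) φ'(|U_{ij}|)`) are self-adjoint for all
differentiable `φ : (0,∞) → ℝ` iff `U` is semi-balanced, i.e. `U_r·U*` and
`U*·U_r` are self-adjoint for all `r > 0`. -/
theorem stmt3 (N : ℕ) (U : Matrix (Fin N) (Fin N) ℂ)
    (hU : U ∈ Matrix.unitaryGroup (Fin N) ℂ) (hne : ∀ i j, U i j ≠ 0) :
    (∀ φ : ℝ → ℝ, (∀ x > (0 : ℝ), DifferentiableAt ℝ φ x) →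
      ((Matrix.of fun i j => csgn (U i j) * deriv φ ‖U i j‖) * Uᴴ).IsHermitian) ↔
    (∀ r : ℝ, 0 < r →
      (colorComp U r * Uᴴ).IsHermitian ∧ (Uᴴ * colorComp U r).IsHermitian) :=
  stmt3_general N U hU
end

section
/- If U ∈ U(N) and V ∈ U(M) are balanced unitary matrices, then their tensor (Kronecker) product U ⊗ V ∈ U(NM) is balanced. -/
open scoped Matrix Kronecker

/-- a matrix is balanced when `U_r·U_s*` and `U_r*·U_s` are self-adjoint
for all `r, s > 0`. -/
def IsBalanced {n : Type*} [Fintype n] (U : Matrix n n ℂ) : Prop :=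
  ∀ r s : ℝ, 0 < r → 0 < s →
    (colorComp U r * (colorComp U s)ᴴ).IsHermitian ∧
    ((colorComp U r)ᴴ * colorComp U s).IsHermitian

/-!
For `p > 0` an entry `U i a * V k b` of `U ⊗ V` has modulus `p` exactly when `|U i a| = r` and
`|V k b| = p / r` for some positive modulus `r` of an entry of `U`; since `sgn` is multiplicative,
this gives `(U ⊗ V)_p = ∑ᵣ U_r ⊗ V_{p/r}`, a finite sum. Every term of
`(U ⊗ V)_p (U ⊗ V)_q*` is then `U_r U_{r'}* ⊗ V_{p/r} V_{q/r'}*`, a Kronecker product of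
self-adjoint matrices, and likewise for `(U ⊗ V)_p* (U ⊗ V)_q`.
-/

open Matrix

lemma csgn_mul (x y : ℂ) : csgn (x * y) = csgn x * csgn y := by
  rw [csgn, csgn, csgn, norm_mul, Complex.ofReal_mul, div_mul_div_comm]

lemma ite_norm_mul_eq_sum {R : Finset ℝ} {x : ℂ} (hx : ‖x‖ ∈ R ↔ 0 < ‖x‖) (y : ℂ) {p : ℝ}
    (hp : 0 < p) :
    (if ‖x * y‖ = p then csgn (x * y) else 0) =
      ∑ r ∈ R, (if ‖x‖ = r then csgn x else 0) * (if ‖y‖ = p / r then csgn y else 0) := by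
  simp only [ite_zero_mul, Finset.sum_ite_eq]
  by_cases hxR : ‖x‖ ∈ R
  · have hx0 : ‖x‖ ≠ 0 := (hx.mp hxR).ne'
    have hnorm : ‖x * y‖ = p ↔ ‖y‖ = p / ‖x‖ := by
      rw [norm_mul, eq_div_iff hx0, mul_comm]
    simp only [hxR, if_true, hnorm, csgn_mul, mul_ite, mul_zero]
  · have hx0 : ‖x‖ = 0 := le_antisymm (not_lt.mp (mt hx.mpr hxR)) (norm_nonneg x)
    have hxy : ‖x * y‖ ≠ p := by rw [norm_mul, hx0, zero_mul]; exact hp.ne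
    simp only [hxR, hxy, if_false]

noncomputable def colorRadii {n : Type*} [Fintype n] (A : Matrix n n ℂ) : Finset ℝ :=
  (Finset.univ.image fun ij : n × n => ‖A ij.1 ij.2‖).filter (0 < ·)

lemma pos_of_mem_colorRadii {n : Type*} [Fintype n] {A : Matrix n n ℂ} {r : ℝ}
    (hr : r ∈ colorRadii A) : 0 < r :=
  (Finset.mem_filter.mp hr).2

lemma norm_mem_colorRadii_iff {n : Type*} [Fintype n] (A : Matrix n n ℂ) (i j : n) :
    ‖A i j‖ ∈ colorRadii A ↔ 0 < ‖A i j‖ := by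
  simp only [colorRadii, Finset.mem_filter, Finset.mem_image, Finset.mem_univ, true_and,
    and_iff_right_iff_imp]
  exact fun _ => ⟨(i, j), rfl⟩

lemma colorComp_kronecker {n m : Type*} [Fintype n] (A : Matrix n n ℂ) (B : Matrix m m ℂ)
    {p : ℝ} (hp : 0 < p) :
    colorComp (A ⊗ₖ B) p = ∑ r ∈ colorRadii A, colorComp A r ⊗ₖ colorComp B (p / r) := by
  ext ⟨i, k⟩ ⟨a, b⟩
  simpa [colorComp, Matrix.sum_apply] using
    ite_norm_mul_eq_sum (norm_mem_colorRadii_iff A i a) (B k b) hp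

lemma Matrix.IsHermitian.kronecker {l m R : Type*} [CommSemiring R] [StarRing R]
    {A : Matrix l l R} {B : Matrix m m R} (hA : A.IsHermitian) (hB : B.IsHermitian) :
    (A ⊗ₖ B).IsHermitian := by
  rw [IsHermitian, conjTranspose_kronecker, hA.eq, hB.eq]

lemma Matrix.isHermitian_sum_mul_sum {ι κ n R : Type*} [Fintype n] [Semiring R] [StarRing R]
    {s : Finset ι} {t : Finset κ} {A : ι → Matrix n n R} {B : κ → Matrix n n R}
    (h : ∀ i ∈ s, ∀ j ∈ t, (A i * B j).IsHermitian) :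
    ((∑ i ∈ s, A i) * ∑ j ∈ t, B j).IsHermitian := by
  rw [Finset.sum_mul]
  simp only [Finset.mul_sum]
  exact isSelfAdjoint_sum _ fun i hi => isSelfAdjoint_sum _ fun j hj => h i hi j hj

theorem IsBalanced.kronecker {n m : Type*} [Fintype n] [Fintype m] {U : Matrix n n ℂ}
    {V : Matrix m m ℂ} (hU : IsBalanced U) (hV : IsBalanced V) : IsBalanced (U ⊗ₖ V) := by
  intro p q hp hq
  have hcomp {r r'} (hr : r ∈ colorRadii U) (hr' : r' ∈ colorRadii U) :=
    And.intro (hU r r' (pos_of_mem_colorRadii hr) (pos_of_mem_colorRadii hr'))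
      (hV (p / r) (q / r') (div_pos hp (pos_of_mem_colorRadii hr))
        (div_pos hq (pos_of_mem_colorRadii hr')))
  rw [colorComp_kronecker U V hp, colorComp_kronecker U V hq, conjTranspose_sum]
  constructor
  · refine isHermitian_sum_mul_sum fun r hr r' hr' => ?_
    rw [conjTranspose_kronecker, ← mul_kronecker_mul]
    exact (hcomp hr hr').1.1.kronecker (hcomp hr hr').2.1
  · rw [conjTranspose_sum]
    refine isHermitian_sum_mul_sum fun r hr r' hr' => ?_
    rw [conjTranspose_kronecker, ← mul_kronecker_mul]
    exact (hcomp hr hr').1.2.kronecker (hcomp hr hr').2.2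

theorem stmt4_general (N M : ℕ) (U : Matrix (Fin N) (Fin N) ℂ) (V : Matrix (Fin M) (Fin M) ℂ)
    (hUb : IsBalanced U) (hVb : IsBalanced V) :
    IsBalanced (U ⊗ₖ V) :=
  hUb.kronecker hVb

/-- The Kronecker product of balanced unitary matrices is balanced. -/
theorem stmt4 (N M : ℕ) (U : Matrix (Fin N) (Fin N) ℂ) (V : Matrix (Fin M) (Fin M) ℂ)
    (hU : U ∈ Matrix.unitaryGroup (Fin N) ℂ) (hV : V ∈ Matrix.unitaryGroup (Fin M) ℂ)
    (hUb : IsBalanced U) (hVb : IsBalanced V) :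
    IsBalanced (U ⊗ₖ V) :=
  stmt4_general N M U V hUb hVb
end

section
/- Let U ∈ U(N) be a unitary matrix with all entries nonzero that locally maximizes the 1-norm on U(N), and set S_{ij} = sgn(U_{ij}). Then the matrix S*·U is self-adjoint, and for every anti-hermitian matrix A ∈ M_N(ℂ) one has Tr(S*·U·A²) + Σ_{i,j} (Im[(UA)_{ij}·conj(S_{ij})])² / |U_{ij}| ≤ 0. -/
/-!
Along the curve `s ↦ U * exp (s • A)` with `A` anti-hermitian, which stays in `U(N)`, the 1-norm is
differentiable near `s = 0` because no entry of `U` vanishes, and it has a local maximum at `0`.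
Its first derivative there is `Re Tr(S* U A)`; as this vanishes for every anti-hermitian `A`,
`S* U` is hermitian. Its second derivative there is the left-hand side of the inequality.
-/

open scoped Matrix ComplexConjugate

open scoped ComplexOrder
open Filter Topology

theorem mul_conj_csgn (w z : ℂ) : w * conj (csgn z) = w * conj z / ‖z‖ := by
  rw [csgn, map_div₀, Complex.conj_ofReal, mul_div_assoc]

theorem IsLocalMax.hasDerivAt_hasDerivAt_nonpos {f f' : ℝ → ℝ} {c x₀ : ℝ}
    (hmax : IsLocalMax f x₀) (hf : ∀ᶠ x in 𝓝 x₀, HasDerivAt f (f' x) x)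
    (hf' : HasDerivAt f' c x₀) : c ≤ 0 := by
  -- If `c > 0`, the second-derivative test makes `x₀` also a local minimum, so `f` is locally
  -- constant and `c = 0`.
  by_contra! hc
  have hderiv : deriv f =ᶠ[𝓝 x₀] f' := hf.mono fun x hx => hx.deriv
  have hmin : IsLocalMin f x₀ :=
    isLocalMin_of_deriv_deriv_pos (by rwa [hderiv.deriv_eq, hf'.deriv])
      (by rw [hderiv.self_of_nhds]; exact hmax.hasDerivAt_eq_zero hf.self_of_nhds)
      hf.self_of_nhds.continuousAt
  have hconst : f =ᶠ[𝓝 x₀] fun _ => f x₀ :=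
    (hmax.and hmin).mono fun x hx => le_antisymm hx.1 hx.2
  have : deriv (deriv f) x₀ = 0 := by
    rw [hconst.deriv.deriv_eq]; simp
  rw [hderiv.deriv_eq, hf'.deriv] at this
  exact hc.ne' this

theorem HasDerivAt.norm_complex {z : ℝ → ℂ} {z' : ℂ} {t : ℝ} (hz : HasDerivAt z z' t)
    (h0 : z t ≠ 0) : HasDerivAt (fun s => ‖z s‖) (z' * conj (csgn (z t))).re t := by
  have hsq := hz.norm_sq.sqrt (pow_ne_zero 2 (norm_ne_zero_iff.mpr h0))
  simp only [Real.sqrt_sq (norm_nonneg _), Complex.inner] at hsq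
  convert hsq using 1
  rw [mul_conj_csgn, Complex.div_ofReal_re]
  field_simp

/-- The derivative of the derivative of `‖z‖` computed in `HasDerivAt.norm_complex`. -/
theorem HasDerivAt.re_mul_conj_csgn {z z' : ℝ → ℂ} {z'' : ℂ} {t : ℝ}
    (hz : HasDerivAt z (z' t) t) (hz' : HasDerivAt z' z'' t) (h0 : z t ≠ 0) :
    HasDerivAt (fun s => (z' s * conj (csgn (z s))).re)
      ((z'' * conj (csgn (z t))).re + (z' t * conj (csgn (z t))).im ^ 2 / ‖z t‖) t := by
  have hnum : HasDerivAt (fun s => (z' s * conj (z s)).re)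
      (z'' * conj (z t) + z' t * conj (z' t)).re t :=
    (Complex.reCLM.hasFDerivAt.comp_hasDerivAt t (hz'.mul hz.star)).congr_deriv (by simp)
  have hquot := hnum.fun_div (hz.norm_complex h0) (norm_ne_zero_iff.mpr h0)
  simp only [mul_conj_csgn, Complex.div_ofReal_re, Complex.div_ofReal_im] at hquot ⊢
  refine hquot.congr_deriv ?_
  have hn : ‖z t‖ ≠ 0 := norm_ne_zero_iff.mpr h0
  have key : (z' t * conj (z t)).re ^ 2 + (z' t * conj (z t)).im ^ 2 =
      Complex.normSq (z' t) * ‖z t‖ ^ 2 := by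
    rw [sq, sq, ← Complex.normSq_apply, Complex.normSq_mul, Complex.normSq_conj, Complex.sq_norm]
  rw [Complex.add_re, Complex.mul_conj, Complex.ofReal_re]
  generalize z' t * conj (z t) = p at key ⊢
  field_simp
  linear_combination -key

section SumNorm
variable {ι : Type*} [Fintype ι] {z z' : ι → ℝ → ℂ} {t : ℝ}

theorem eventually_hasDerivAt_sum_norm (hz : ∀ k s, HasDerivAt (z k) (z' k s) s)
    (h0 : ∀ k, z k t ≠ 0) :
    ∀ᶠ s in 𝓝 t, HasDerivAt (fun r => ∑ k, ‖z k r‖)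
      (∑ k, (z' k s * conj (csgn (z k s))).re) s := by
  have hne : ∀ᶠ s in 𝓝 t, ∀ k, z k s ≠ 0 :=
    eventually_all.2 fun k => (hz k t).continuousAt.eventually_ne (h0 k)
  filter_upwards [hne] with s hs
  exact HasDerivAt.fun_sum fun k _ => (hz k s).norm_complex (hs k)

theorem IsLocalMax.sum_re_mul_conj_csgn_eq_zero (hmax : IsLocalMax (fun s => ∑ k, ‖z k s‖) t)
    (hz : ∀ k s, HasDerivAt (z k) (z' k s) s) (h0 : ∀ k, z k t ≠ 0) :
    ∑ k, (z' k t * conj (csgn (z k t))).re = 0 :=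
  hmax.hasDerivAt_eq_zero (eventually_hasDerivAt_sum_norm hz h0).self_of_nhds

theorem IsLocalMax.sum_second_variation_norm_nonpos {z'' : ι → ℂ}
    (hmax : IsLocalMax (fun s => ∑ k, ‖z k s‖) t) (hz : ∀ k s, HasDerivAt (z k) (z' k s) s)
    (hz' : ∀ k, HasDerivAt (z' k) (z'' k) t) (h0 : ∀ k, z k t ≠ 0) :
    ∑ k, ((z'' k * conj (csgn (z k t))).re + (z' k t * conj (csgn (z k t))).im ^ 2 / ‖z k t‖)
      ≤ 0 :=
  hmax.hasDerivAt_hasDerivAt_nonpos (eventually_hasDerivAt_sum_norm hz h0)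
    (HasDerivAt.fun_sum fun k _ => (hz k t).re_mul_conj_csgn (hz' k) (h0 k))

end SumNorm

open NormedSpace

namespace Matrix
variable {n : Type*} [Fintype n]

theorem re_trace_conjTranspose_mul (S M : Matrix n n ℂ) :
    (Sᴴ * M).trace.re = ∑ i, ∑ j, (M i j * conj (S i j)).re := by
  rw [Finset.sum_comm]
  simp [Matrix.trace, Matrix.mul_apply, mul_comm]

theorem isHermitian_of_re_trace_mul_eq_zero {B : Matrix n n ℂ}
    (h : ∀ A : Matrix n n ℂ, Aᴴ = -A → (B * A).trace.re = 0) : B.IsHermitian := by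
  -- Testing against `K = Bᴴ - B` gives `Re Tr(Kᴴ K) = 2 Re Tr(B K) = 0`.
  set K := Bᴴ - B with hKdef
  have hK : Kᴴ = -K := by rw [hKdef, conjTranspose_sub, conjTranspose_conjTranspose, neg_sub]
  have hBK : (B * K).trace.re = 0 := h K hK
  have hBstarK : (Bᴴ * K).trace.re = 0 := by
    rw [← Complex.conj_re, ← Complex.star_def, ← trace_conjTranspose, conjTranspose_mul,
      conjTranspose_conjTranspose, hK, neg_mul, trace_neg, Complex.neg_re, trace_mul_comm, hBK,
      neg_zero]
  have hKK : (Kᴴ * K).trace = 0 := by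
    obtain ⟨-, him⟩ := Complex.nonneg_iff.mp (posSemidef_conjTranspose_mul_self K).trace_nonneg
    refine Complex.ext ?_ him.symm
    rw [hK, neg_mul, trace_neg, Complex.neg_re, hKdef, sub_mul, trace_sub, Complex.sub_re, hBK,
      hBstarK]
    simp
  exact sub_eq_zero.mp (trace_conjTranspose_mul_self_eq_zero_iff.mp hKK)

variable [DecidableEq n]

theorem exp_mem_unitaryGroup {A : Matrix n n ℂ} (hA : Aᴴ = -A) : exp A ∈ unitaryGroup n ℂ := by
  rw [mem_unitaryGroup_iff', star_eq_conjTranspose, ← exp_conjTranspose, hA,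
    ← exp_add_of_commute _ _ (Commute.refl A).neg_left, neg_add_cancel, exp_zero]

theorem hasDerivAt_mul_exp_smul_mul_apply (M A N : Matrix n n ℂ) (i j : n) (t : ℝ) :
    HasDerivAt (fun s : ℝ => (M * exp (s • A) * N) i j) ((M * exp (t • A) * A * N) i j) t := by
  open scoped Norms.Operator in
  have hM : HasDerivAt (fun s : ℝ => M * exp (s • A) * N) (M * (exp (t • A) * A) * N) t :=
    ((hasDerivAt_exp_smul_const A t).const_mul M).mul_const N
  have hij :=
    (LinearMap.toContinuousLinearMap (entryLinearMap ℝ ℂ i j)).hasFDerivAt.comp_hasDerivAt t hM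
  rw [← Matrix.mul_assoc] at hij
  exact hij

theorem hasDerivAt_mul_exp_smul_apply (M A : Matrix n n ℂ) (i j : n) (t : ℝ) :
    HasDerivAt (fun s : ℝ => (M * exp (s • A)) i j) ((M * exp (t • A) * A) i j) t := by
  simpa using hasDerivAt_mul_exp_smul_mul_apply M A 1 i j t

end Matrix

section UnitaryCurve
variable {n : Type*} [Fintype n] [DecidableEq n]

def IsLocalMaxOneNorm (U : Matrix n n ℂ) : Prop :=
  ∃ ε > (0 : ℝ), ∀ V ∈ Matrix.unitaryGroup n ℂ,
    (∀ i j, ‖V i j - U i j‖ < ε) → ∑ i, ∑ j, ‖V i j‖ ≤ ∑ i, ∑ j, ‖U i j‖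

theorem isLocalMax_sum_norm_mul_exp {U A : Matrix n n ℂ} (hU : U ∈ Matrix.unitaryGroup n ℂ)
    (hA : Aᴴ = -A)
    (hmax : IsLocalMaxOneNorm U) :
    IsLocalMax (fun s : ℝ => ∑ k : n × n, ‖(U * exp (s • A)) k.1 k.2‖) 0 := by
  obtain ⟨ε, hε, hU_max⟩ := hmax
  have hclose : ∀ i j, ∀ᶠ s in 𝓝 (0 : ℝ), ‖(U * exp (s • A)) i j - U i j‖ < ε := by
    intro i j
    have hlim : Tendsto (fun s : ℝ => (U * exp (s • A)) i j) (𝓝 0) (𝓝 (U i j)) := by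
      simpa using (Matrix.hasDerivAt_mul_exp_smul_apply U A i j 0).continuousAt.tendsto
    simpa [dist_eq_norm] using Metric.tendsto_nhds.mp hlim ε hε
  filter_upwards [eventually_all.2 fun i => eventually_all.2 (hclose i)] with s hs
  have hskew : (s • A)ᴴ = -(s • A) := by simp [Matrix.conjTranspose_smul, hA]
  simpa [Fintype.sum_prod_type] using
    hU_max _ (mul_mem hU (Matrix.exp_mem_unitaryGroup hskew)) hs

theorem re_trace_map_csgn_mul_eq_zero {U : Matrix n n ℂ} (hU : U ∈ Matrix.unitaryGroup n ℂ) (hne : ∀ i j, U i j ≠ 0)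
    (hmax : IsLocalMaxOneNorm U)
    {A : Matrix n n ℂ} (hA : Aᴴ = -A) :
    ((U.map csgn)ᴴ * U * A).trace.re = 0 := by
  have h := (isLocalMax_sum_norm_mul_exp hU hA hmax).sum_re_mul_conj_csgn_eq_zero
    (fun k s => Matrix.hasDerivAt_mul_exp_smul_apply U A k.1 k.2 s)
    (fun k => by simpa using hne k.1 k.2)
  simpa [Matrix.mul_assoc, Matrix.re_trace_conjTranspose_mul, Fintype.sum_prod_type] using h

theorem re_trace_map_csgn_mul_sq_add_le_zero {U : Matrix n n ℂ}
    (hU : U ∈ Matrix.unitaryGroup n ℂ) (hne : ∀ i j, U i j ≠ 0)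
    (hmax : IsLocalMaxOneNorm U)
    {A : Matrix n n ℂ} (hA : Aᴴ = -A) :
    ((U.map csgn)ᴴ * U * (A * A)).trace.re +
      ∑ i, ∑ j, (((U * A) i j * conj (csgn (U i j))).im) ^ 2 / ‖U i j‖ ≤ 0 := by
  have h := (isLocalMax_sum_norm_mul_exp hU hA hmax).sum_second_variation_norm_nonpos
    (fun k s => Matrix.hasDerivAt_mul_exp_smul_apply U A k.1 k.2 s)
    (fun k => Matrix.hasDerivAt_mul_exp_smul_mul_apply U A A k.1 k.2 0)
    (fun k => by simpa using hne k.1 k.2)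
  simpa [Matrix.mul_assoc, Matrix.re_trace_conjTranspose_mul, Finset.sum_add_distrib,
    Fintype.sum_prod_type] using h

end UnitaryCurve

/-- If `U ∈ U(N)` has nonzero entries and locally maximizes the 1-norm
on `U(N)`, then with `S_{ij} = sgn(U_{ij})` the matrix `S*·U` is self-adjoint, and
`Tr(S*·U·A²) + ∑_{i,j} (Im[(UA)_{ij}·conj S_{ij}])²/|U_{ij}| ≤ 0` for every
anti-hermitian `A` (the trace being real since `S*·U` is self-adjoint). -/
theorem stmt11 (N : ℕ) (U : Matrix (Fin N) (Fin N) ℂ)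
    (hU : U ∈ Matrix.unitaryGroup (Fin N) ℂ) (hne : ∀ i j, U i j ≠ 0)
    (hmax : ∃ ε > (0 : ℝ), ∀ V ∈ Matrix.unitaryGroup (Fin N) ℂ,
      (∀ i j, ‖V i j - U i j‖ < ε) →
        ∑ i, ∑ j, ‖V i j‖ ≤ ∑ i, ∑ j, ‖U i j‖)
    (S : Matrix (Fin N) (Fin N) ℂ) (hS : S = Matrix.of fun i j => csgn (U i j)) :
    (Sᴴ * U).IsHermitian ∧
    ∀ A : Matrix (Fin N) (Fin N) ℂ, Aᴴ = -A →
      (Matrix.trace (Sᴴ * U * (A * A))).re +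
        ∑ i, ∑ j, (((U * A) i j * conj (S i j)).im) ^ 2 / ‖U i j‖ ≤ 0 := by
  subst hS
  exact ⟨Matrix.isHermitian_of_re_trace_mul_eq_zero fun A hA =>
      re_trace_map_csgn_mul_eq_zero hU hne hmax hA,
    fun A hA => re_trace_map_csgn_mul_sq_add_le_zero hU hne hmax hA⟩
end
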